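/- For every integer b ≥ 1, the topological entropy of the map g_{1,b} : [0,1] → [0,1] equals log b. -/

import Mathlib

open Set MeasureTheory

/-- The piecewise-affine `b`-branched sawtooth map on `[0,1]`:
`g1 b x = b*x - k` on `[k/b,(k+1)/b]` for `k ∈ {0,…,b-1}` even, and
`g1 b x = (k+1) - b*x` there for `k` odd.  (For `x ∈ [0,1]`, the index
`k = min ⌊b*x⌋ (b-1)` is exactly the branch index; at common endpoints of two
branches both formulas agree, so this agrees with the piecewise definition.) -/
noncomputable def g1 (b : ℕ) (x : ℝ) : ℝ :=
  let k : ℤ := min ⌊(b : ℝ) * x⌋ ((b : ℤ) - 1)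
  if Even k then (b : ℝ) * x - (k : ℝ) else ((k : ℝ) + 1) - (b : ℝ) * x

namespace G1Aux

open Set Dynamics Filter Uniformity UniformSpace
open scoped ENNReal ENat
open scoped SetRel

/-- The sawtooth (distance to the nearest even integer), as the norm on `AddCircle 2`. -/
noncomputable def ww (t : ℝ) : ℝ := ‖(t : AddCircle (2:ℝ))‖

lemma ww_nonneg (t : ℝ) : 0 ≤ ww t := norm_nonneg _

lemma ww_eq (t : ℝ) : ww t = |t - round (t / 2) * 2| := by
  rw [ww, AddCircle.norm_eq]
  norm_num [div_eq_inv_mul]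

lemma ww_le_one (t : ℝ) : ww t ≤ 1 := by
  rw [ww_eq]
  have h := abs_sub_round (t / 2)
  have h2 : t - round (t/2) * 2 = (t/2 - round (t/2)) * 2 := by ring
  rw [h2, abs_mul]
  rw [abs_of_nonneg (by norm_num : (0:ℝ) ≤ 2)]
  linarith

lemma ww_lipschitz (s t : ℝ) : |ww s - ww t| ≤ |s - t| := by
  have h1 : |ww s - ww t| ≤ ‖(s : AddCircle (2:ℝ)) - (t : AddCircle (2:ℝ))‖ :=
    abs_norm_sub_norm_le _ _
  have h2 : (s : AddCircle (2:ℝ)) - (t : AddCircle (2:ℝ)) = ((s - t : ℝ) : AddCircle (2:ℝ)) := by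
    rw [AddCircle.coe_sub]
  rw [h2] at h1
  exact h1.trans ((QuotientAddGroup.norm_mk_le_norm (m := s - t)).trans_eq (Real.norm_eq_abs _))

lemma ww_Icc {t : ℝ} (h : t ∈ Icc (0:ℝ) 1) : ww t = t := by
  rcases eq_or_lt_of_le h.2 with h1 | h1
  · subst h1
    rw [ww_eq]
    norm_num [round_eq]
  · rw [ww_eq]
    have : round (t / 2) = 0 := by
      rw [round_eq_zero_iff]
      constructor
      · linarith [h.1]
      · show t / 2 < 1/2; linarith
    rw [this]
    push_cast
    rw [abs_of_nonneg (by linarith [h.1])]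
    ring

lemma coe_even_zero (k : ℤ) (hk : Even k) : (((k:ℝ)) : AddCircle (2:ℝ)) = 0 := by
  obtain ⟨j, rfl⟩ := hk
  rw [AddCircle.coe_eq_zero_iff]
  exact ⟨j, by rw [zsmul_eq_mul]; push_cast; ring⟩

lemma ww_even_add (k : ℤ) (hk : Even k) (t : ℝ) : ww ((k : ℝ) + t) = ww t := by
  rw [ww, ww, AddCircle.coe_add, coe_even_zero k hk, zero_add]

lemma ww_neg (t : ℝ) : ww (-t) = ww t := by
  rw [ww, ww, AddCircle.coe_neg, norm_neg]

lemma ww_mul_nat (b : ℕ) (t : ℝ) : ww ((b:ℝ) * ww t) = ww ((b:ℝ) * t) := by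
  rcases abs_cases (t - round (t / 2) * 2) with ⟨he, _⟩ | ⟨he, _⟩
  · have : (b:ℝ) * ww t = ((-(2 * (b * round (t/2))) : ℤ) : ℝ) + (b:ℝ) * t := by
      rw [ww_eq, he]; push_cast; ring
    rw [this, ww_even_add _ (by exact ⟨-(b * round (t/2)), by ring⟩) _]
  · have : (b:ℝ) * ww t = (((2 * (b * round (t/2))) : ℤ) : ℝ) + -((b:ℝ) * t) := by
      rw [ww_eq, he]; push_cast; ring
    rw [this, ww_even_add _ (by exact ⟨(b * round (t/2)), by ring⟩) _, ww_neg]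

lemma g1_eq_ww (b : ℕ) (hb : 1 ≤ b) {x : ℝ} (hx : x ∈ Icc (0:ℝ) 1) :
    g1 b x = ww ((b:ℝ) * x) := by
  rcases eq_or_lt_of_le hx.2 with h1 | h1
  · -- x = 1
    subst h1
    have hfl : ⌊(b:ℝ) * 1⌋ = (b:ℤ) := by rw [mul_one]; exact_mod_cast Int.floor_intCast (b:ℤ)
    have hk : min ⌊(b:ℝ) * 1⌋ ((b:ℤ) - 1) = (b:ℤ) - 1 := by rw [hfl]; omega
    rcases Int.even_or_odd ((b:ℤ) - 1) with he | ho
    · have hwt : ww ((b:ℝ) * 1) = 1 := by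
        calc ww ((b:ℝ) * 1) = ww ((((b:ℤ) - 1 : ℤ) : ℝ) + 1) := by push_cast; ring_nf
        _ = ww 1 := ww_even_add _ he 1
        _ = 1 := ww_Icc (by norm_num)
      simp only [g1, hk, if_pos he, hwt]
      push_cast; ring
    · have hbe : Even ((b:ℤ)) := by
        obtain ⟨j, hj⟩ := ho; exact ⟨j + 1, by omega⟩
      have hwt : ww ((b:ℝ) * 1) = 0 := by
        calc ww ((b:ℝ) * 1) = ww (((b:ℤ) : ℝ) + 0) := by push_cast; ring_nf
        _ = ww 0 := ww_even_add _ hbe 0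
        _ = 0 := ww_Icc (by norm_num)
      have hnotev : ¬ Even ((b:ℤ) - 1) := Int.not_even_iff_odd.mpr ho
      simp only [g1, hk, if_neg hnotev, hwt]
      push_cast; ring
  · -- x < 1
    simp only [g1]
    have htlt : (b:ℝ) * x < (b:ℝ) := by
      have hb' : (0:ℝ) < b := by exact_mod_cast hb
      nlinarith [hx.1]
    have hfl : ⌊(b:ℝ) * x⌋ ≤ (b:ℤ) - 1 := by
      have : ⌊(b:ℝ) * x⌋ < (b:ℤ) := by
        rw [Int.floor_lt]; exact_mod_cast htlt
      omega
    have hk : min ⌊(b:ℝ) * x⌋ ((b:ℤ) - 1) = ⌊(b:ℝ) * x⌋ := min_eq_left hfl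
    set t : ℝ := (b:ℝ) * x with ht
    clear_value t
    have hfr0 : (0:ℝ) ≤ t - ⌊t⌋ := by linarith [Int.floor_le t]
    have hfr1 : t - ⌊t⌋ < 1 := by linarith [Int.lt_floor_add_one t]
    rcases Int.even_or_odd ⌊t⌋ with he | ho
    · have hwt : ww t = t - ⌊t⌋ := by
        calc ww t = ww ((⌊t⌋ : ℝ) + (t - ⌊t⌋)) := by ring_nf
        _ = ww (t - ⌊t⌋) := ww_even_add _ he _
        _ = t - ⌊t⌋ := ww_Icc ⟨hfr0, le_of_lt hfr1⟩
      rw [hk, if_pos he, hwt]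
    · have hoe : Even (⌊t⌋ + 1) := by obtain ⟨j, hj⟩ := ho; exact ⟨j + 1, by omega⟩
      have hwt : ww t = (⌊t⌋:ℝ) + 1 - t := by
        calc ww t = ww (((⌊t⌋ + 1 : ℤ) : ℝ) + (t - ((⌊t⌋:ℝ) + 1))) := by push_cast; ring_nf
        _ = ww (t - ((⌊t⌋:ℝ) + 1)) := ww_even_add _ hoe _
        _ = ww (-(((⌊t⌋:ℝ) + 1) - t)) := by ring_nf
        _ = ww (((⌊t⌋:ℝ) + 1) - t) := ww_neg _
        _ = (⌊t⌋:ℝ) + 1 - t := ww_Icc ⟨by linarith, by linarith⟩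
      have hnotev : ¬ Even ⌊t⌋ := Int.not_even_iff_odd.mpr ho
      rw [hk, if_neg hnotev, hwt]

lemma ww_mem_Icc (t : ℝ) : ww t ∈ Icc (0:ℝ) 1 := ⟨ww_nonneg t, ww_le_one t⟩

lemma g1_mapsTo (b : ℕ) (hb : 1 ≤ b) : MapsTo (g1 b) (Icc (0:ℝ) 1) (Icc (0:ℝ) 1) :=
  fun x hx => by rw [g1_eq_ww b hb hx]; exact ww_mem_Icc _

lemma g1_iterate (b : ℕ) (hb : 1 ≤ b) (n : ℕ) {x : ℝ} (hx : x ∈ Icc (0:ℝ) 1) :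
    (g1 b)^[n] x = ww ((b:ℝ)^n * x) := by
  induction n with
  | zero => simpa using (ww_Icc hx).symm
  | succ n ih =>
    rw [Function.iterate_succ_apply', ih, g1_eq_ww b hb (ww_mem_Icc _), ww_mul_nat]
    congr 1
    ring

lemma log_natCast_ennreal (k : ℕ) (hk : 1 ≤ k) :
    ENNReal.log ((k : ℕ∞) : ℝ≥0∞) = ((Real.log k : ℝ) : EReal) := by
  rw [show ((k : ℕ∞) : ℝ≥0∞) = (k : ℝ≥0∞) by simp]
  rw [ENNReal.log_pos_real (by exact_mod_cast Nat.pos_of_ne_zero (by omega) |>.ne') (by simp)]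
  simp

lemma upper (b : ℕ) (hb : 1 ≤ b) :
    Dynamics.coverEntropy (g1 b) (Set.Icc (0 : ℝ) 1) ≤ (Real.log b : EReal) := by
  classical
  have hb0 : (0:ℝ) < b := by exact_mod_cast hb
  rw [coverEntropy_eq_iSup_basis Metric.uniformity_basis_dist (g1 b) (Icc (0:ℝ) 1)]
  refine iSup₂_le fun ε hε => ?_
  set T := g1 b with hT
  set F := Icc (0:ℝ) 1 with hF
  set V : Set (ℝ × ℝ) := {p | dist p.1 p.2 < ε/2} with hV
  have hVsymm : SetRel.IsSymm V := by
    refine ⟨fun x y h => ?_⟩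
    simp only [hV, mem_setOf_eq] at h ⊢
    rwa [dist_comm]
  have hVV : V ○ V ⊆ {p : ℝ × ℝ | dist p.1 p.2 < ε} := by
    rintro ⟨x, y⟩ ⟨z, h1, h2⟩
    simp only [hV, mem_setOf_eq] at h1 h2 ⊢
    calc dist x y ≤ dist x z + dist z y := dist_triangle x z y
    _ < ε/2 + ε/2 := add_lt_add h1 h2
    _ = ε := by ring
  refine le_trans (coverEntropyEntourage_antitone T F hVV ) ?_
  -- now bound coverEntropyEntourage T F (V ○ V) using explicit covers
  set C : ℕ := ⌈2/ε⌉₊ + 1 with hC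
  have hC1 : 1 ≤ C := by omega
  have key : ∀ n : ℕ, 1 ≤ n →
      coverEntropyEntourage T F (V ○ V) ≤
        (((Real.log C + n * Real.log b) / n : ℝ) : EReal) := by
    intro n hn
    set δ : ℝ := ε / (2 * (b:ℝ)^n) with hδ
    have hbn : (0:ℝ) < (b:ℝ)^n := pow_pos hb0 n
    have hδ0 : 0 < δ := by positivity
    set m : ℕ := ⌈2 * (b:ℝ)^n / ε⌉₊ with hm
    set s : Finset ℝ := (Finset.range (m+1)).image (fun i : ℕ => (i:ℝ) * δ) with hs
    have hcover : IsDynCoverOf T F V n s := by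
      intro y hy
      have hy0 : (0:ℝ) ≤ y := hy.1
      have hy1 : y ≤ 1 := hy.2
      set i : ℕ := ⌊y / δ⌋₊ with hi
      set x : ℝ := (i:ℝ) * δ with hx
      have hxy0 : x ≤ y := by
        rw [hx]
        calc (i:ℝ) * δ ≤ (y/δ) * δ := by
              apply mul_le_mul_of_nonneg_right _ hδ0.le
              exact Nat.floor_le (by positivity)
        _ = y := by field_simp
      have hxy1 : y - x < δ := by
        have h2 : y / δ < i + 1 := Nat.lt_floor_add_one _
        have := (div_lt_iff₀ hδ0).1 h2
        rw [hx]
        nlinarith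
      have hxF : x ∈ F := ⟨by positivity, le_trans hxy0 hy1⟩
      have hix : i ≤ m := by
        have h1 : (i:ℝ) ≤ y / δ := Nat.floor_le (by positivity)
        have h2 : y / δ ≤ 2 * (b:ℝ)^n / ε := by
          rw [hδ, div_div_eq_mul_div, div_le_div_iff₀ (by positivity) hε]
          nlinarith [mul_nonneg (mul_nonneg (sub_nonneg.2 hy1) hbn.le) hε.le]
        have h3 : (2 * (b:ℝ)^n / ε) ≤ (m:ℝ) := by rw [hm]; exact Nat.le_ceil _
        exact_mod_cast h1.trans (h2.trans h3)
      have hxs : x ∈ s := by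
        rw [hs]
        exact Finset.mem_image.2 ⟨i, Finset.mem_range.2 (by omega), rfl⟩
      refine ⟨x, hxs, ?_⟩
      rw [mem_dynEntourage]
      intro k hk
      have hkT : T^[k] y = ww ((b:ℝ)^k * y) := g1_iterate b hb k hy
      have hkTx : T^[k] x = ww ((b:ℝ)^k * x) := g1_iterate b hb k hxF
      simp only [UniformSpace.ball, mem_preimage, hV, mem_setOf_eq, hkT, hkTx]
      rw [dist_comm, Real.dist_eq]
      have hlip := ww_lipschitz ((b:ℝ)^k * x) ((b:ℝ)^k * y)
      have hbk : (b:ℝ)^k ≤ (b:ℝ)^(n-1) := by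
        apply pow_le_pow_right₀ (by exact_mod_cast hb)
        omega
      have habs : |(b:ℝ)^k * x - (b:ℝ)^k * y| = (b:ℝ)^k * (y - x) := by
        rw [show (b:ℝ)^k * x - (b:ℝ)^k * y = -((b:ℝ)^k * (y - x)) by ring, abs_neg,
          abs_of_nonneg (by nlinarith [pow_pos hb0 k])]
      have hbkpos : (0:ℝ) < (b:ℝ)^k := pow_pos hb0 k
      have hchain : (b:ℝ)^k * (y - x) < (b:ℝ)^(n-1) * δ := by
        have h1 : (b:ℝ)^k * (y - x) ≤ (b:ℝ)^(n-1) * (y - x) :=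
          mul_le_mul_of_nonneg_right hbk (by linarith)
        have h2 : (b:ℝ)^(n-1) * (y - x) < (b:ℝ)^(n-1) * δ :=
          mul_lt_mul_of_pos_left hxy1 (pow_pos hb0 _)
        linarith
      have hfin : (b:ℝ)^(n-1) * δ ≤ ε/2 := by
        rw [hδ]
        rw [mul_div_assoc']
        rw [div_le_div_iff₀ (by positivity) (by norm_num)]
        have : (b:ℝ)^(n-1) * 1 ≤ (b:ℝ)^n := by
          rw [mul_one]
          apply pow_le_pow_right₀ (by exact_mod_cast hb)
          omega
        nlinarith
      calc |ww ((b:ℝ)^k * x) - ww ((b:ℝ)^k * y)| ≤ |(b:ℝ)^k * x - (b:ℝ)^k * y| := hlip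
      _ = (b:ℝ)^k * (y - x) := habs
      _ < (b:ℝ)^(n-1) * δ := hchain
      _ ≤ ε/2 := hfin
    have hcard : s.card ≤ C * b ^ n := by
      have h1 : s.card ≤ m + 1 := le_trans (Finset.card_image_le) (by simp)
      have h2 : m ≤ ⌈2/ε⌉₊ * b ^ n := by
        rw [hm]
        apply Nat.ceil_le.2
        push_cast
        calc 2 * (b:ℝ)^n / ε = (2/ε) * (b:ℝ)^n := by ring
        _ ≤ (⌈2/ε⌉₊ : ℝ) * (b:ℝ)^n := by
              apply mul_le_mul_of_nonneg_right (Nat.le_ceil _) (by positivity)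
      have h3 : 1 ≤ b ^ n := Nat.one_le_pow _ _ hb
      calc s.card ≤ m + 1 := h1
      _ ≤ ⌈2/ε⌉₊ * b ^ n + 1 := by omega
      _ ≤ C * b ^ n := by rw [hC]; nlinarith
    have hF_inv : MapsTo T F F := g1_mapsTo b hb
    have := hcover.coverEntropyEntourage_le_log_card_div hF_inv
      (Nat.pos_iff_ne_zero.1 (Nat.lt_of_lt_of_le Nat.zero_lt_one hn)) -- 0 < n
    refine le_trans this ?_
    have hlog : ENNReal.log ((s.card : ℕ∞) : ℝ≥0∞) ≤
        ((Real.log C + n * Real.log b : ℝ) : EReal) := by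
      have h1 : ((s.card : ℕ∞) : ℝ≥0∞) ≤ (((C * b^n : ℕ) : ℕ∞) : ℝ≥0∞) := by
        exact_mod_cast hcard
      refine le_trans (ENNReal.log_monotone h1) ?_
      rw [log_natCast_ennreal (C * b^n) (Nat.one_le_iff_ne_zero.2 (by positivity))]
      apply EReal.coe_le_coe_iff.2
      rw [show ((C * b^n : ℕ) : ℝ) = (C:ℝ) * (b:ℝ)^n by push_cast; ring,
        Real.log_mul (by positivity) (by positivity), Real.log_pow]
    have hn0 : (0:EReal) ≤ (n : EReal) := by exact_mod_cast Nat.zero_le n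
    refine le_trans (EReal.div_le_div_right_of_nonneg hn0 hlog) ?_
    rw [← EReal.coe_coe_eq_natCast n, ← EReal.coe_div]
  -- limit argument
  have hL : Tendsto (fun n : ℕ => (((Real.log C + n * Real.log b) / n : ℝ) : EReal)) atTop
      (nhds ((Real.log b : ℝ) : EReal)) := by
    rw [EReal.tendsto_coe]
    have h1 : Tendsto (fun n : ℕ => Real.log C / n + Real.log b) atTop
        (nhds (0 + Real.log b)) :=
      (tendsto_const_div_atTop_nhds_zero_nat (Real.log C)).add tendsto_const_nhds
    rw [zero_add] at h1
    apply h1.congr'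
    filter_upwards [eventually_ge_atTop 1] with n hn
    have hn' : (n:ℝ) ≠ 0 := by positivity
    field_simp
  exact ge_of_tendsto hL (by filter_upwards [eventually_ge_atTop 1] with n hn; exact key n hn)

/-- Tail sums of a base-`B` expansion. -/
noncomputable def tl (B L k : ℕ) (c : ℕ → ℕ) : ℝ :=
  ∑ j ∈ Finset.Ico k L, (c j : ℝ) / (B:ℝ)^(j+1-k)

section TL

variable {B L : ℕ} {c c' : ℕ → ℕ}

lemma tl_nonneg (hB : 1 ≤ B) (k : ℕ) : 0 ≤ tl B L k c :=
  Finset.sum_nonneg fun j _ => by positivity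

lemma geo_sum (hB : 1 ≤ B) (M : ℕ) :
    ∑ i ∈ Finset.range M, ((B:ℝ) - 1) / (B:ℝ)^(i+1) = 1 - 1/(B:ℝ)^M := by
  have hB0 : (B:ℝ) ≠ 0 := by positivity
  induction M with
  | zero => simp
  | succ M ih =>
    rw [Finset.sum_range_succ, ih]
    field_simp
    ring

lemma tl_le_one (hB : 1 ≤ B) (hcb : ∀ j, c j ≤ B - 1) (k : ℕ) : tl B L k c ≤ 1 := by
  have h1 : tl B L k c ≤ ∑ j ∈ Finset.Ico k L, ((B:ℝ) - 1) / (B:ℝ)^(j+1-k) := by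
    apply Finset.sum_le_sum
    intro j _
    apply div_le_div_of_nonneg_right _ (by positivity)
    have h2 : ((c j : ℕ) : ℝ) ≤ ((B - 1 : ℕ) : ℝ) := Nat.cast_le.2 (hcb j)
    rwa [Nat.cast_sub hB, Nat.cast_one] at h2
  have h2 : ∑ j ∈ Finset.Ico k L, ((B:ℝ) - 1) / (B:ℝ)^(j+1-k)
      = ∑ i ∈ Finset.range (L - k), ((B:ℝ) - 1) / (B:ℝ)^(i+1) := by
    rw [Finset.sum_Ico_eq_sum_range]
    apply Finset.sum_congr rfl
    intro i _
    congr 2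
    omega
  rw [h2, geo_sum hB] at h1
  have : (0:ℝ) < (B:ℝ)^(L-k) := by positivity
  have h3 : 0 ≤ 1/(B:ℝ)^(L-k) := by positivity
  linarith

lemma tl_mem_Icc (hB : 1 ≤ B) (hcb : ∀ j, c j ≤ B - 1) (k : ℕ) :
    tl B L k c ∈ Icc (0:ℝ) 1 := ⟨tl_nonneg hB k, tl_le_one hB hcb k⟩

lemma tl_split (hB : 1 ≤ B) {k : ℕ} (hk : k < L) :
    tl B L k c = ((c k : ℝ) + tl B L (k+1) c) / (B:ℝ) := by
  have hB0 : (B:ℝ) ≠ 0 := by positivity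
  rw [tl, Finset.sum_eq_sum_Ico_succ_bot hk]
  have h1 : ∑ j ∈ Finset.Ico (k+1) L, (c j : ℝ) / (B:ℝ)^(j+1-k)
      = (∑ j ∈ Finset.Ico (k+1) L, (c j : ℝ) / (B:ℝ)^(j+1-(k+1))) / (B:ℝ) := by
    rw [Finset.sum_div]
    apply Finset.sum_congr rfl
    intro j hj
    have hjk : k + 1 ≤ j := (Finset.mem_Ico.1 hj).1
    rw [div_div, ← pow_succ]
    congr 2
    omega
  rw [h1, tl]
  have hkk : k + 1 - k = 1 := by omega
  rw [hkk, pow_one]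
  field_simp

lemma tl_orbit (hB : 1 ≤ B) (hce : ∀ j, Even (c j)) {k : ℕ} (hk : k ≤ L) :
    ∃ N : ℤ, Even N ∧ (B:ℝ)^k * tl B L 0 c = (N : ℝ) + tl B L k c := by
  induction k with
  | zero => exact ⟨0, Even.zero, by simp⟩
  | succ k ih =>
    obtain ⟨N, hN, hNe⟩ := ih (by omega)
    have hkL : k < L := by omega
    refine ⟨(B:ℤ) * N + (c k : ℤ), ?_, ?_⟩
    · obtain ⟨j, hj⟩ := hN
      obtain ⟨i, hi⟩ := hce k
      exact ⟨(B:ℤ) * j + i, by rw [hj, hi]; push_cast; ring⟩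
    · have hsplit := tl_split (c := c) hB hkL
      have hB0 : (B:ℝ) ≠ 0 := by positivity
      rw [pow_succ]
      calc (B:ℝ)^k * (B:ℝ) * tl B L 0 c = (B:ℝ) * ((B:ℝ)^k * tl B L 0 c) := by ring
      _ = (B:ℝ) * ((N:ℝ) + tl B L k c) := by rw [hNe]
      _ = (B:ℝ) * ((N:ℝ) + ((c k : ℝ) + tl B L (k+1) c) / (B:ℝ)) := by rw [hsplit]
      _ = (((B:ℤ) * N + (c k : ℤ) : ℤ) : ℝ) + tl B L (k+1) c := by
            push_cast
            field_simp
            ring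

lemma tl_ww (hB : 1 ≤ B) (hce : ∀ j, Even (c j)) (hcb : ∀ j, c j ≤ B - 1) {k : ℕ}
    (hk : k ≤ L) : ww ((B:ℝ)^k * tl B L 0 c) = tl B L k c := by
  obtain ⟨N, hN, hNe⟩ := tl_orbit hB hce hk
  rw [hNe, ww_even_add N hN, ww_Icc (tl_mem_Icc hB hcb k)]

lemma tl_sep (hB : 1 ≤ B) (hce : ∀ j, Even (c j)) (hcb : ∀ j, c j ≤ B - 1)
    (hce' : ∀ j, Even (c' j)) (hcb' : ∀ j, c' j ≤ B - 1) {k : ℕ} (hk : k < L)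
    (hne : c k ≠ c' k) : 1 / (B:ℝ) ≤ |tl B L k c - tl B L k c'| := by
  have hB0 : (0:ℝ) < (B:ℝ) := by positivity
  rw [tl_split hB hk, tl_split hB hk]
  set a : ℝ := (c k : ℝ) - (c' k : ℝ) with ha
  set d : ℝ := tl B L (k+1) c - tl B L (k+1) c' with hd
  have hdiff : ((c k : ℝ) + tl B L (k+1) c) / (B:ℝ) - ((c' k : ℝ) + tl B L (k+1) c') / (B:ℝ)
      = (a + d) / (B:ℝ) := by rw [ha, hd]; ring
  rw [hdiff, abs_div, abs_of_pos hB0]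
  have ht1 := tl_mem_Icc (c := c) (L := L) hB hcb (k+1)
  have ht2 := tl_mem_Icc (c := c') (L := L) hB hcb' (k+1)
  have hd1 : |d| ≤ 1 := by
    rw [hd]
    rw [abs_le]
    constructor
    · linarith [ht1.1, ht2.2]
    · linarith [ht1.2, ht2.1]
  have hsep2 : (c k) + 2 ≤ c' k ∨ (c' k) + 2 ≤ c k := by
    obtain ⟨u, hu⟩ := hce k
    obtain ⟨v, hv⟩ := hce' k
    omega
  have ha2 : (2:ℝ) ≤ |a| := by
    rcases hsep2 with h | h
    · have : (c k : ℝ) + 2 ≤ (c' k : ℝ) := by exact_mod_cast h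
      rw [ha, abs_of_nonpos (by linarith)]
      linarith
    · have : (c' k : ℝ) + 2 ≤ (c k : ℝ) := by exact_mod_cast h
      rw [ha, abs_of_nonneg (by linarith)]
      linarith
  have h1 : (1:ℝ) ≤ |a + d| := by
    have h2 : |(a + d) - d| ≤ |a + d| + |d| := abs_sub _ _
    have h3 : (a + d) - d = a := by ring
    rw [h3] at h2
    linarith
  gcongr

end TL

lemma lower (b : ℕ) (hb : 1 ≤ b) :
    (Real.log b : EReal) ≤ Dynamics.coverEntropy (g1 b) (Set.Icc (0 : ℝ) 1) := by
  classical
  set T := g1 b with hT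
  set F := Icc (0:ℝ) 1 with hF
  have key : ∀ m : ℕ, 1 ≤ m →
      ((Real.log b - Real.log 2 / m : ℝ) : EReal) ≤ coverEntropy T F := by
    intro m hm
    set B : ℕ := b ^ m with hB
    have hB1 : 1 ≤ B := Nat.one_le_pow _ _ hb
    have hBR : (0:ℝ) < B := by exact_mod_cast hB1
    set Dc : ℕ := (B + 1) / 2 with hDc
    have hDc1 : 1 ≤ Dc := by omega
    set U : Set (ℝ × ℝ) := {p | dist p.1 p.2 < 1 / (2*B)} with hU
    have hUuni : U ∈ uniformity ℝ := Metric.dist_mem_uniformity (by positivity)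
    refine le_trans ?_ (netEntropyEntourage_le_coverEntropy T F hUuni)
    set digits : Finset ℕ := (Finset.range Dc).image (fun i => 2*i) with hdig
    have hdigcard : digits.card = Dc := by
      rw [hdig, Finset.card_image_of_injective _ (fun x y h => by omega)]
      simp
    have hdig_even : ∀ d ∈ digits, Even d := by
      intro d hd
      rw [hdig] at hd
      obtain ⟨i, _, rfl⟩ := Finset.mem_image.1 hd
      exact ⟨i, (two_mul i)⟩
    have hdig_le : ∀ d ∈ digits, d ≤ B - 1 := by
      intro d hd
      rw [hdig] at hd
      obtain ⟨i, hi, rfl⟩ := Finset.mem_image.1 hd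
      have := Finset.mem_range.1 hi
      omega
    have keyL : ∀ L : ℕ, 1 ≤ L →
        ((Real.log b - Real.log 2 / m : ℝ) : EReal) ≤
          ENNReal.log ((netMaxcard T F U (m*L) : ℕ∞) : ℝ≥0∞) / ((m*L : ℕ) : EReal) := by
      intro L hL
      set W : Finset (Fin L → ℕ) := Fintype.piFinset (fun _ => digits) with hW
      set ext : (Fin L → ℕ) → (ℕ → ℕ) :=
        fun c j => if h : j < L then c ⟨j, h⟩ else 0 with hext
      have hce : ∀ c ∈ W, ∀ j, Even (ext c j) := by
        intro c hc j
        rw [hext]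
        dsimp only
        split
        · exact hdig_even _ (Fintype.mem_piFinset.1 hc _)
        · exact Even.zero
      have hcb : ∀ c ∈ W, ∀ j, ext c j ≤ B - 1 := by
        intro c hc j
        rw [hext]
        dsimp only
        split
        · exact hdig_le _ (Fintype.mem_piFinset.1 hc _)
        · omega
      set pt : (Fin L → ℕ) → ℝ := fun c => tl B L 0 (ext c) with hpt
      have hsep : ∀ c ∈ W, ∀ c' ∈ W, c ≠ c' → ∃ k, k < L ∧
          1/(B:ℝ) ≤ |tl B L k (ext c) - tl B L k (ext c')| := by
        intro c hc c' hc' hne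
        have hkex : ∃ k : Fin L, c k ≠ c' k := by
          by_contra h
          push_neg at h
          exact hne (funext h)
        obtain ⟨k, hk⟩ := hkex
        refine ⟨k.val, k.isLt, tl_sep hB1 (hce c hc) (hcb c hc) (hce c' hc') (hcb c' hc')
          k.isLt ?_⟩
        rw [hext]
        dsimp only
        rw [dif_pos k.isLt, dif_pos k.isLt]
        simpa [Fin.eta] using hk
      have hptF : ∀ c ∈ W, pt c ∈ F := fun c hc => tl_mem_Icc hB1 (hcb c hc) 0
      have horb : ∀ c ∈ W, ∀ k, k ≤ L → T^[m*k] (pt c) = tl B L k (ext c) := by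
        intro c hc k hkL
        rw [hT, g1_iterate b hb (m*k) (hptF c hc), hpt]
        dsimp only
        rw [pow_mul]
        have hcast : ((b:ℝ)^m) = (B:ℝ) := by rw [hB]; push_cast; ring
        rw [hcast]
        exact tl_ww hB1 (hce c hc) (hcb c hc) hkL
      have hinj : Set.InjOn pt W := by
        intro c hc c' hc' he
        by_contra hne
        obtain ⟨k, hkL, hk⟩ := hsep c hc c' hc' hne
        have h1 : tl B L k (ext c) = tl B L k (ext c') := by
          rw [← horb c hc k hkL.le, ← horb c' hc' k hkL.le, he]
        rw [h1, sub_self, abs_zero] at hk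
        have : (0:ℝ) < 1/(B:ℝ) := by positivity
        linarith
      set S : Finset ℝ := W.image pt with hS
      have hScard : S.card = Dc ^ L := by
        rw [hS, Finset.card_image_of_injOn hinj, hW, Fintype.card_piFinset]
        simp [hdigcard]
      have hnet : IsDynNetIn T F U (m*L) (S : Set ℝ) := by
        constructor
        · intro x hx
          obtain ⟨c, hc, rfl⟩ := Finset.mem_image.1 hx
          exact hptF c hc
        · intro x hx y hy hxy
          simp only [hS, Finset.coe_image, Set.mem_image, Finset.mem_coe] at hx hy
          obtain ⟨c, hc, rfl⟩ := hx
          obtain ⟨c', hc', rfl⟩ := hy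
          have hcc : c ≠ c' := fun h => hxy (by rw [h])
          obtain ⟨k, hkL, hk⟩ := hsep c hc c' hc' hcc
          rw [Function.onFun, Set.disjoint_left]
          intro z hz1 hz2
          rw [mem_ball_dynEntourage] at hz1 hz2
          have hmk : m * k < m * L := by
            exact Nat.mul_lt_mul_of_le_of_lt (le_refl m) hkL (by omega)
          have h1 := hz1 (m*k) hmk
          have h2 := hz2 (m*k) hmk
          simp only [hU, UniformSpace.ball, mem_preimage, mem_setOf_eq] at h1 h2
          rw [horb c hc k hkL.le] at h1
          rw [horb c' hc' k hkL.le] at h2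
          rw [Real.dist_eq] at h1 h2
          have htri : |tl B L k (ext c) - tl B L k (ext c')| < 1/(B:ℝ) := by
            have h3 : |tl B L k (ext c) - tl B L k (ext c')| ≤
                |tl B L k (ext c) - T^[m*k] z| + |T^[m*k] z - tl B L k (ext c')| :=
              abs_sub_le _ _ _
            have h4 : |T^[m*k] z - tl B L k (ext c')| = |tl B L k (ext c') - T^[m*k] z| :=
              abs_sub_comm _ _
            rw [h4] at h3
            have hhalf : 1/(2*(B:ℝ)) + 1/(2*(B:ℝ)) = 1/(B:ℝ) := by
              field_simp
              norm_num
            push_cast at h1 h2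
            linarith
          linarith
      have hmax : ((Dc ^ L : ℕ) : ℕ∞) ≤ netMaxcard T F U (m*L) := by
        rw [← hScard]
        exact_mod_cast hnet.card_le_netMaxcard
      have hmono : ENNReal.log (((Dc ^ L : ℕ) : ℕ∞) : ℝ≥0∞) ≤
          ENNReal.log ((netMaxcard T F U (m*L) : ℝ≥0∞)) :=
        ENNReal.log_monotone (by exact_mod_cast hmax)
      have hlogval : ENNReal.log (((Dc ^ L : ℕ) : ℕ∞) : ℝ≥0∞) =
          ((Real.log ((Dc:ℝ) ^ L) : ℝ) : EReal) := by
        rw [log_natCast_ennreal _ (Nat.one_le_pow _ _ hDc1)]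
        norm_cast
      have hn0 : (0:EReal) ≤ ((m*L : ℕ) : EReal) := by exact_mod_cast Nat.zero_le _
      have hreal : Real.log b - Real.log 2 / m ≤ Real.log ((Dc:ℝ) ^ L) / ((m*L : ℕ) : ℝ) := by
        have hm0 : (0:ℝ) < m := by exact_mod_cast hm
        have hL0 : (0:ℝ) < L := by exact_mod_cast hL
        have hDcB : (B:ℝ)/2 ≤ (Dc:ℝ) := by
          have : B ≤ 2 * Dc := by omega
          have h5 : (B:ℝ) ≤ 2 * (Dc:ℝ) := by exact_mod_cast this
          linarith
        have hlogDc : Real.log ((B:ℝ)/2) ≤ Real.log Dc :=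
          Real.log_le_log (by positivity) hDcB
        have hlogB : Real.log ((B:ℝ)/2) = m * Real.log b - Real.log 2 := by
          rw [Real.log_div (by positivity) (by norm_num), hB]
          push_cast
          rw [Real.log_pow]
        have hexp : Real.log ((Dc:ℝ) ^ L) = L * Real.log Dc := by
          rw [← Real.rpow_natCast, Real.log_rpow (by exact_mod_cast hDc1 : (0:ℝ) < Dc)]
        have hlog2 : m * Real.log b - Real.log 2 ≤ Real.log Dc := by
          rw [← hlogB]; exact hlogDc
        have hcast : ((m*L : ℕ) : ℝ) = (m:ℝ) * L := by push_cast; ring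
        rw [hexp, hcast]
        have h7 : (L:ℝ) * Real.log Dc / ((m:ℝ)*L) = Real.log Dc / m := by
          field_simp
        rw [h7]
        have h8 : (m * Real.log b - Real.log 2)/(m:ℝ) ≤ Real.log Dc / m := by gcongr
        have h9 : (m * Real.log b - Real.log 2)/(m:ℝ) = Real.log b - Real.log 2/m := by
          field_simp
        linarith
      calc ((Real.log b - Real.log 2 / m : ℝ) : EReal)
          ≤ ((Real.log ((Dc:ℝ) ^ L) / ((m*L : ℕ) : ℝ) : ℝ) : EReal) := EReal.coe_le_coe_iff.2 hreal
      _ = ((Real.log ((Dc:ℝ) ^ L) : ℝ) : EReal) / ((m*L : ℕ) : EReal) := by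
            rw [EReal.coe_div, EReal.coe_coe_eq_natCast]
      _ ≤ ENNReal.log ((netMaxcard T F U (m*L) : ℕ∞) : ℝ≥0∞) / ((m*L : ℕ) : EReal) := by
            apply EReal.div_le_div_right_of_nonneg hn0
            rw [← hlogval]
            exact hmono
    -- pass to the limsup
    have htend : Tendsto (fun L : ℕ => m * L) atTop atTop :=
      Filter.tendsto_atTop_mono (fun L => Nat.le_mul_of_pos_left L (by omega)) tendsto_id
    have hfreq : ∃ᶠ n in atTop, ((Real.log b - Real.log 2 / m : ℝ) : EReal) ≤
        ENNReal.log ((netMaxcard T F U n : ℕ∞) : ℝ≥0∞) / (n : EReal) := by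
      apply htend.frequently
      apply Filter.Eventually.frequently
      filter_upwards [eventually_ge_atTop 1] with L hL
      exact keyL L hL
    have hbdd : Filter.IsBoundedUnder (· ≤ ·) atTop
        (fun n : ℕ => ENNReal.log ((netMaxcard T F U n : ℕ∞) : ℝ≥0∞) / (n : EReal)) :=
      ⟨⊤, by filter_upwards with n; exact le_top⟩
    exact le_limsup_of_frequently_le hfreq hbdd
  have hLim : Tendsto (fun m : ℕ => ((Real.log b - Real.log 2 / m : ℝ) : EReal)) atTop
      (nhds ((Real.log b : ℝ) : EReal)) := by
    rw [EReal.tendsto_coe]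
    have h1 := tendsto_const_div_atTop_nhds_zero_nat (Real.log 2)
    simpa using tendsto_const_nhds.sub h1
  exact le_of_tendsto hLim (eventually_atTop.2 ⟨1, key⟩)

end G1Aux

/-- For every integer `b ≥ 1`, the topological entropy of `g_{1,b} : [0,1] → [0,1]`
equals `log b`. -/
theorem coverEntropy_g1 (b : ℕ) (hb : 1 ≤ b) :
    Dynamics.coverEntropy (g1 b) (Set.Icc (0 : ℝ) 1) = (Real.log b : EReal) := by
  exact le_antisymm (G1Aux.upper b hb) (G1Aux.lower b hb)
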